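/- arXiv:math/0605746 — 2 statements merged into one kernel-verified Lean document; each statement's English description precedes it below -/
import Mathlib

section
/- A square (a × a) can be tiled with squares (2 × 2), (3 × 3), and (5 × 5) if and only if a ≠ 1 and a ≠ 7. -/
/-!
Every `6 × n` strip with `n ≠ 1` is a stack of `6 × 2` and `6 × 3` strips, so a tiling of the
`a × a` square with `a ≠ 1` extends to the `(a + 6) × (a + 6)` square by an `a × 6` and a
`6 × (a + 6)` strip. From the sides 0, 2, 3, 4, 5, 6 this reaches every side except 1, 7 and
13; the `13 × 13` square is a `6 × 13` strip beside an explicit tiling of `7 × 13` that uses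
5×5 squares.

The `7 × 7` square fails by parity: the tiles crossing a column have sides in {2, 3, 5} summing
to 7, so exactly one of them has odd side. Summing over the seven columns, the sides of the
odd-sided tiles add up to 7; being 3s and 5s, exactly one of them would be odd, a single tile
of side 7.
-/

/-- The `a1 × a2` grid of unit cells is partitioned by axis-aligned translated
copies of bricks from `bricks` placed at integer positions.  A placement
`(x, y, w, h)` covers cells `(i, j)` with `x ≤ i < x + w` and `y ≤ j < y + h`. -/
def Tiles (bricks : Finset (ℕ × ℕ)) (a1 a2 : ℕ) : Prop :=
  ∃ P : Finset (ℕ × ℕ × ℕ × ℕ),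
    (∀ q ∈ P, (q.2.2.1, q.2.2.2) ∈ bricks ∧ q.1 + q.2.2.1 ≤ a1 ∧ q.2.1 + q.2.2.2 ≤ a2) ∧
    (∀ i j : ℕ, i < a1 → j < a2 →
      ∃! q : ℕ × ℕ × ℕ × ℕ, q ∈ P ∧
        q.1 ≤ i ∧ i < q.1 + q.2.2.1 ∧ q.2.1 ≤ j ∧ j < q.2.1 + q.2.2.2)

open Finset

def IsTiling (bricks : Finset (ℕ × ℕ)) (a₁ a₂ : ℕ) (P : Finset (ℕ × ℕ × ℕ × ℕ)) : Prop :=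
  (∀ q ∈ P, (q.2.2.1, q.2.2.2) ∈ bricks ∧ q.1 + q.2.2.1 ≤ a₁ ∧ q.2.1 + q.2.2.2 ≤ a₂) ∧
    (∀ i j : ℕ, i < a₁ → j < a₂ →
      ∃! q : ℕ × ℕ × ℕ × ℕ, q ∈ P ∧
        q.1 ≤ i ∧ i < q.1 + q.2.2.1 ∧ q.2.1 ≤ j ∧ j < q.2.1 + q.2.2.2)

theorem card_filter_range_le_lt {x w n : ℕ} (h : x + w ≤ n) :
    #{t ∈ range n | x ≤ t ∧ t < x + w} = w := by
  have : {t ∈ range n | x ≤ t ∧ t < x + w} = Ico x (x + w) := by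
    ext t
    simp only [mem_filter, mem_range, mem_Ico]
    omega
  simp [this]

theorem sum_length_eq_sum_card_filter_le_lt {ι : Type*} (s : Finset ι) (x w : ι → ℕ) {n : ℕ}
    (h : ∀ i ∈ s, x i + w i ≤ n) :
    ∑ i ∈ s, w i = ∑ t ∈ range n, #{i ∈ s | x i ≤ t ∧ t < x i + w i} := by
  rw [← sum_congr rfl fun i hi => card_filter_range_le_lt (h i hi)]
  exact sum_card_bipartiteAbove_eq_sum_card_bipartiteBelow _

theorem card_odd_eq_one_of_sum_eq_seven {ι : Type*} {s : Finset ι} {f : ι → ℕ}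
    (hf : ∀ i ∈ s, f i = 2 ∨ f i = 3 ∨ f i = 5) (hs : ∑ i ∈ s, f i = 7) :
    #{i ∈ s | Odd (f i)} = 1 := by
  have hodd : Odd #{i ∈ s | Odd (f i)} := by
    rw [← odd_sum_iff_odd_card_odd, hs]; decide
  have hle : 3 * #{i ∈ s | Odd (f i)} ≤ 7 :=
    calc 3 * #{i ∈ s | Odd (f i)} = ∑ i ∈ s with Odd (f i), 3 := by
          rw [sum_const, smul_eq_mul, mul_comm]
    _ ≤ ∑ i ∈ s with Odd (f i), f i := sum_le_sum fun i hi => by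
        obtain ⟨his, k, hk⟩ := mem_filter.1 hi
        have := hf i his
        omega
    _ ≤ ∑ i ∈ s, f i := sum_le_sum_of_subset (filter_subset _ _)
    _ = 7 := hs
  obtain ⟨k, hk⟩ := hodd
  omega

theorem IsTiling.sum_height_column {bricks : Finset (ℕ × ℕ)} {a₁ a₂ : ℕ}
    {P : Finset (ℕ × ℕ × ℕ × ℕ)} (hP : IsTiling bricks a₁ a₂ P) {t : ℕ} (ht : t < a₁) :
    ∑ q ∈ P with q.1 ≤ t ∧ t < q.1 + q.2.2.1, q.2.2.2 = a₂ := by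
  rw [sum_length_eq_sum_card_filter_le_lt _ (fun q => q.2.1) (fun q => q.2.2.2)
    fun q hq => (hP.1 q (mem_filter.1 hq).1).2.2]
  calc _ = ∑ _j ∈ range a₂, 1 := sum_congr rfl fun j hj => by
        rw [card_eq_one_iff_existsUnique]
        simpa only [filter_filter, mem_filter, and_assoc] using hP.2 t j ht (mem_range.1 hj)
    _ = a₂ := by simp

namespace Tiles

variable {bricks : Finset (ℕ × ℕ)}

theorem zero_left (h : ℕ) : Tiles bricks 0 h :=
  ⟨∅, by simp, fun i _ hi => absurd hi i.not_lt_zero⟩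

theorem of_mem {w h : ℕ} (hb : (w, h) ∈ bricks) : Tiles bricks w h := by
  refine ⟨{(0, 0, w, h)}, by simpa using hb, fun i j hi hj => ⟨(0, 0, w, h), ?_, ?_⟩⟩
  · simp [hi, hj]
  · rintro r ⟨hr, -⟩
    exact mem_singleton.1 hr

theorem of_card_filter_eq_one {a₁ a₂ : ℕ} (P : Finset (ℕ × ℕ × ℕ × ℕ))
    (hv : ∀ q ∈ P, (q.2.2.1, q.2.2.2) ∈ bricks ∧ q.1 + q.2.2.1 ≤ a₁ ∧ q.2.1 + q.2.2.2 ≤ a₂)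
    (hc : ∀ i < a₁, ∀ j < a₂,
      #{q ∈ P | q.1 ≤ i ∧ i < q.1 + q.2.2.1 ∧ q.2.1 ≤ j ∧ j < q.2.1 + q.2.2.2} = 1) :
    Tiles bricks a₁ a₂ :=
  ⟨P, hv, fun i j hi hj => by simpa [card_eq_one_iff_existsUnique] using hc i hi j hj⟩

theorem add_height {w h₁ h₂ : ℕ} (t₁ : Tiles bricks w h₁) (t₂ : Tiles bricks w h₂) :
    Tiles bricks w (h₁ + h₂) := by
  obtain ⟨P₁, hv₁, hc₁⟩ := t₁
  obtain ⟨P₂, hv₂, hc₂⟩ := t₂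
  refine ⟨P₁ ∪ P₂.image fun q => (q.1, q.2.1 + h₁, q.2.2), ?_, fun i j hi hj => ?_⟩
  · intro q hq
    rcases mem_union.1 hq with hq | hq
    · obtain ⟨hb, hx, hy⟩ := hv₁ q hq
      exact ⟨hb, hx, by omega⟩
    · obtain ⟨r, hr, rfl⟩ := mem_image.1 hq
      obtain ⟨hb, hx, hy⟩ := hv₂ r hr
      exact ⟨hb, hx, by dsimp only; omega⟩
  by_cases hj₁ : j < h₁
  · obtain ⟨q, hq, hu⟩ := hc₁ i j hi hj₁
    refine ⟨q, ⟨mem_union_left _ hq.1, hq.2⟩, fun r ⟨hr, hri⟩ => ?_⟩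
    rcases mem_union.1 hr with hr | hr
    · exact hu r ⟨hr, hri⟩
    · obtain ⟨s, -, rfl⟩ := mem_image.1 hr
      dsimp only at hri
      omega
  · obtain ⟨q, hq, hu⟩ := hc₂ i (j - h₁) hi (by omega)
    refine ⟨(q.1, q.2.1 + h₁, q.2.2), ⟨mem_union_right _ (mem_image_of_mem _ hq.1), by
      dsimp only; omega⟩, fun r ⟨hr, hri⟩ => ?_⟩
    rcases mem_union.1 hr with hr | hr
    · have := (hv₁ r hr).2.2
      omega
    · obtain ⟨s, hs, rfl⟩ := mem_image.1 hr
      dsimp only at hri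
      rw [hu s ⟨hs, by omega⟩]

theorem transpose (hb : ∀ w h, (w, h) ∈ bricks → (h, w) ∈ bricks) {w h : ℕ}
    (t : Tiles bricks w h) : Tiles bricks h w := by
  obtain ⟨P, hv, hc⟩ := t
  refine ⟨P.image fun q => (q.2.1, q.1, q.2.2.2, q.2.2.1), ?_, fun i j hi hj => ?_⟩
  · intro q hq
    obtain ⟨r, hr, rfl⟩ := mem_image.1 hq
    obtain ⟨hbr, hx, hy⟩ := hv r hr
    exact ⟨hb _ _ hbr, hy, hx⟩
  · obtain ⟨q, hq, hu⟩ := hc j i hj hi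
    refine ⟨(q.2.1, q.1, q.2.2.2, q.2.2.1), ⟨mem_image_of_mem _ hq.1, by dsimp only; omega⟩,
      fun r ⟨hr, hri⟩ => ?_⟩
    obtain ⟨s, hs, rfl⟩ := mem_image.1 hr
    dsimp only at hri
    rw [hu s ⟨hs, by omega⟩]

theorem add_width (hb : ∀ w h, (w, h) ∈ bricks → (h, w) ∈ bricks) {w₁ w₂ h : ℕ}
    (t₁ : Tiles bricks w₁ h) (t₂ : Tiles bricks w₂ h) : Tiles bricks (w₁ + w₂) h :=
  ((t₁.transpose hb).add_height (t₂.transpose hb)).transpose hb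

end Tiles

local notation "B" => ({(2, 2), (3, 3), (5, 5)} : Finset (ℕ × ℕ))

theorem tiles_seven_thirteen : Tiles B 7 13 :=
  Tiles.of_card_filter_eq_one {(0, 0, 2, 2), (2, 0, 5, 5), (0, 2, 2, 2), (0, 4, 2, 2), (2, 5, 3, 3),
    (5, 5, 2, 2), (0, 6, 2, 2), (5, 7, 2, 2), (0, 8, 5, 5), (5, 9, 2, 2), (5, 11, 2, 2)}
    (by decide) (by decide)

theorem squares_swap_mem : ∀ w h, (w, h) ∈ B → (h, w) ∈ B := by
  intro w h hb
  simp only [mem_insert, mem_singleton, Prod.mk.injEq] at hb ⊢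
  omega

theorem tiles_six_two : Tiles B 6 2 :=
  let t : Tiles B 2 2 := .of_mem (by decide)
  (t.add_width squares_swap_mem t).add_width squares_swap_mem t

theorem tiles_six_three : Tiles B 6 3 :=
  let t : Tiles B 3 3 := .of_mem (by decide)
  t.add_width squares_swap_mem t

theorem tiles_six_of_ne_one : ∀ n, n ≠ 1 → Tiles B 6 n
  | 0, _ => (Tiles.zero_left 6).transpose squares_swap_mem
  | 1, h => absurd rfl h
  | 2, _ => tiles_six_two
  | 3, _ => tiles_six_three
  | n + 4, _ => (tiles_six_of_ne_one (n + 2) (by omega)).add_height tiles_six_two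

theorem tiles_add_six {a : ℕ} (ha : a ≠ 1) (t : Tiles B a a) : Tiles B (a + 6) (a + 6) :=
  (t.add_height ((tiles_six_of_ne_one a ha).transpose squares_swap_mem)).add_width squares_swap_mem
    (tiles_six_of_ne_one (a + 6) (by omega))

theorem tiles_four : Tiles B 4 4 :=
  let t : Tiles B 2 2 := .of_mem (by decide)
  (t.add_height t).add_width squares_swap_mem (t.add_height t)

theorem tiles_thirteen : Tiles B 13 13 :=
  (tiles_six_of_ne_one 13 (by decide)).add_width squares_swap_mem tiles_seven_thirteen

theorem tiles_square_of_ne {a : ℕ} (h₁ : a ≠ 1) (h₇ : a ≠ 7) : Tiles B a a := by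
  induction a using Nat.strong_induction_on with
  | _ a ih =>
  by_cases h₁₃ : a = 13
  · exact h₁₃ ▸ tiles_thirteen
  by_cases hsmall : a < 6
  · interval_cases a
    · exact Tiles.zero_left 0
    · contradiction
    · exact .of_mem (by decide)
    · exact .of_mem (by decide)
    · exact tiles_four
    · exact .of_mem (by decide)
  obtain ⟨b, rfl⟩ : ∃ b, a = b + 6 := ⟨a - 6, by omega⟩
  exact tiles_add_six (by omega) (ih b (by omega) (by omega) (by omega))

theorem not_tiles_one : ¬ Tiles B 1 1 := by
  rintro ⟨P, hv, hc⟩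
  obtain ⟨q, ⟨hq, -⟩, -⟩ := hc 0 0 one_pos one_pos
  obtain ⟨hb, hx, -⟩ := hv q hq
  simp only [mem_insert, mem_singleton, Prod.mk.injEq] at hb
  omega

theorem not_tiles_seven : ¬ Tiles B 7 7 := by
  intro h
  obtain ⟨P, hP⟩ : ∃ P, IsTiling B 7 7 P := h
  have hsq : ∀ q ∈ P, q.2.2.2 = q.2.2.1 ∧ (q.2.2.1 = 2 ∨ q.2.2.1 = 3 ∨ q.2.2.1 = 5) := by
    intro q hq
    have hb := (hP.1 q hq).1
    simp only [mem_insert, mem_singleton, Prod.mk.injEq] at hb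
    omega
  set Q := {q ∈ P | Odd q.2.2.1}
  have hcol : ∀ t < 7, #{q ∈ Q | q.1 ≤ t ∧ t < q.1 + q.2.2.1} = 1 := by
    intro t ht
    have := card_odd_eq_one_of_sum_eq_seven (fun q hq => (hsq q (mem_filter.1 hq).1).1 ▸
      (hsq q (mem_filter.1 hq).1).2) (hP.sum_height_column ht)
    rw [filter_filter] at this
    rw [filter_filter, ← this]
    refine congrArg card (filter_congr fun q hq => ?_)
    rw [(hsq q hq).1]
    tauto
  have hwidth : ∑ q ∈ Q, q.2.2.1 = 7 := by
    rw [sum_length_eq_sum_card_filter_le_lt Q (·.1) (·.2.2.1)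
      fun q hq => (hP.1 q (mem_filter.1 hq).1).2.1,
      sum_congr rfl fun t ht => hcol t (mem_range.1 ht)]
    simp
  have hone := card_odd_eq_one_of_sum_eq_seven (fun q hq => (hsq q (mem_filter.1 hq).1).2) hwidth
  rw [filter_true_of_mem fun q hq => (mem_filter.1 hq).2, card_eq_one] at hone
  obtain ⟨q, hQ⟩ := hone
  have hq : q ∈ P := (mem_filter.1 (hQ ▸ mem_singleton_self q)).1
  rw [show Q = {q} from hQ, sum_singleton] at hwidth
  have := hsq q hq
  omega

theorem tiling_square_235_general (a : ℕ) :
    Tiles {(2, 2), (3, 3), (5, 5)} a a ↔ a ≠ 1 ∧ a ≠ 7 := by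
  refine ⟨fun h => ⟨?_, ?_⟩, fun h => tiles_square_of_ne h.1 h.2⟩
  · rintro rfl
    exact not_tiles_one h
  · rintro rfl
    exact not_tiles_seven h

/-- a square of side a ≥ 1 can be tiled with 2×2, 3×3 and 5×5
squares if and only if a ≠ 1 and a ≠ 7. -/
theorem tiling_square_235 (a : ℕ) (ha : 1 ≤ a) :
    Tiles {(2, 2), (3, 3), (5, 5)} a a ↔ a ≠ 1 ∧ a ≠ 7 :=
  tiling_square_235_general a
end

section
/- The square (11 × 11) cannot be tiled with squares (2 × 2), (3 × 3), and (7 × 7). -/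
open Finset

def cells (q : ℕ × ℕ × ℕ × ℕ) : Finset (ℕ × ℕ) :=
  Ico q.1 (q.1 + q.2.2.1) ×ˢ Ico q.2.1 (q.2.1 + q.2.2.2)

theorem mem_cells {q : ℕ × ℕ × ℕ × ℕ} {i j : ℕ} :
    (i, j) ∈ cells q ↔ q.1 ≤ i ∧ i < q.1 + q.2.2.1 ∧ q.2.1 ≤ j ∧ j < q.2.1 + q.2.2.2 := by
  simp only [cells, mem_product, mem_Ico, and_assoc]

section Tiling

variable {a1 a2 : ℕ} {P : Finset (ℕ × ℕ × ℕ × ℕ)}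

theorem sum_cells_eq_sum_tiles {M : Type*} [AddCommMonoid M]
    (hfit : ∀ q ∈ P, q.1 + q.2.2.1 ≤ a1 ∧ q.2.1 + q.2.2.2 ≤ a2)
    (hcov : ∀ i j : ℕ, i < a1 → j < a2 →
      ∃! q : ℕ × ℕ × ℕ × ℕ, q ∈ P ∧
        q.1 ≤ i ∧ i < q.1 + q.2.2.1 ∧ q.2.1 ≤ j ∧ j < q.2.1 + q.2.2.2)
    (w : ℕ × ℕ → M) :
    ∑ c ∈ cells (0, 0, a1, a2), w c = ∑ q ∈ P, ∑ c ∈ cells q, w c := by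
  classical
  have hunion : cells (0, 0, a1, a2) = P.biUnion cells := by
    ext ⟨i, j⟩
    simp only [mem_biUnion, mem_cells]
    constructor
    · rintro ⟨-, hi, -, hj⟩
      obtain ⟨q, ⟨hq, hcell⟩, -⟩ := hcov i j (by omega) (by omega)
      exact ⟨q, hq, hcell⟩
    · rintro ⟨q, hq, hcell⟩
      have := hfit q hq
      omega
  have hdisj : (P : Set (ℕ × ℕ × ℕ × ℕ)).PairwiseDisjoint cells := by
    intro q hq q' hq' hne
    refine disjoint_left.mpr fun ⟨i, j⟩ hc hc' => hne ?_
    rw [mem_cells] at hc hc'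
    have := hfit q hq
    obtain ⟨_, -, huniq⟩ := hcov i j (by omega) (by omega)
    exact (huniq q ⟨hq, hc⟩).trans (huniq q' ⟨hq', hc'⟩).symm
  rw [hunion, sum_biUnion hdisj]

theorem tile_eq_of_lt_add_of_lt_add
    (hfit : ∀ q ∈ P, q.1 + q.2.2.1 ≤ a1 ∧ q.2.1 + q.2.2.2 ≤ a2)
    (hcov : ∀ i j : ℕ, i < a1 → j < a2 →
      ∃! q : ℕ × ℕ × ℕ × ℕ, q ∈ P ∧
        q.1 ≤ i ∧ i < q.1 + q.2.2.1 ∧ q.2.1 ≤ j ∧ j < q.2.1 + q.2.2.2)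
    {q q' : ℕ × ℕ × ℕ × ℕ} (hq : q ∈ P) (hq' : q' ∈ P)
    (hw : a1 < q.2.2.1 + q'.2.2.1) (hh : a2 < q.2.2.2 + q'.2.2.2) : q = q' := by
  have := hfit q hq
  have := hfit q' hq'
  obtain ⟨_, -, huniq⟩ := hcov (max q.1 q'.1) (max q.2.1 q'.2.1) (by omega) (by omega)
  exact (huniq q ⟨hq, by omega⟩).trans (huniq q' ⟨hq', by omega⟩).symm

end Tiling

theorem sum_Ico_add_mul_of_sum_Ico_eq_zero {M : Type*} [AddCommMonoid M] {f : ℕ → M} {n : ℕ}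
    (hf : ∀ x, ∑ i ∈ Ico x (x + n), f i = 0) (x r k : ℕ) :
    ∑ i ∈ Ico x (x + (r + n * k)), f i = ∑ i ∈ Ico x (x + r), f i := by
  induction k with
  | zero => simp
  | succ k ih =>
    rw [← ih, ← sum_Ico_consecutive f (by omega) (show x + (r + n * k) ≤ x + (r + n * (k + 1)) by
      gcongr; omega), show x + (r + n * (k + 1)) = x + (r + n * k) + n by ring, hf, add_zero]

def alt (i : ℕ) : ℤ := (-1) ^ i

def tri (i : ℕ) : ℤ := if i % 3 = 2 then -2 else 1

def weight (c : ℕ × ℕ) : ℤ := alt c.1 * tri c.2 + tri c.1 * alt c.2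

theorem sum_Ico_alt_two (x : ℕ) : ∑ i ∈ Ico x (x + 2), alt i = 0 := by
  simp only [sum_Ico_eq_sum_range, add_tsub_cancel_left, sum_range_succ, sum_range_zero, alt,
    pow_add]
  ring

theorem sum_Ico_tri_three (x : ℕ) : ∑ i ∈ Ico x (x + 3), tri i = 0 := by
  simp only [sum_Ico_eq_sum_range, add_tsub_cancel_left, sum_range_succ, sum_range_zero, tri]
  split_ifs <;> omega

theorem sum_cells_weight (x y a b : ℕ) :
    ∑ c ∈ cells (x, y, a, b), weight c =
      (∑ i ∈ Ico x (x + a), alt i) * ∑ j ∈ Ico y (y + b), tri j +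
        (∑ i ∈ Ico x (x + a), tri i) * ∑ j ∈ Ico y (y + b), alt j := by
  simp only [cells, weight, sum_product, sum_add_distrib, sum_mul_sum]

theorem sum_cells_weight_two (x y : ℕ) : ∑ c ∈ cells (x, y, 2, 2), weight c = 0 := by
  simp [sum_cells_weight, sum_Ico_alt_two]

theorem sum_cells_weight_three (x y : ℕ) : ∑ c ∈ cells (x, y, 3, 3), weight c = 0 := by
  simp [sum_cells_weight, sum_Ico_tri_three]

theorem sum_Ico_alt_seven (x : ℕ) : ∑ i ∈ Ico x (x + 7), alt i = alt x := by
  simpa using sum_Ico_add_mul_of_sum_Ico_eq_zero sum_Ico_alt_two x 1 3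

theorem sum_Ico_tri_seven (x : ℕ) : ∑ i ∈ Ico x (x + 7), tri i = tri x := by
  simpa using sum_Ico_add_mul_of_sum_Ico_eq_zero sum_Ico_tri_three x 1 2

theorem sum_cells_weight_seven (x y : ℕ) :
    ∑ c ∈ cells (x, y, 7, 7), weight c = alt x * tri y + tri x * alt y := by
  rw [sum_cells_weight, sum_Ico_alt_seven, sum_Ico_alt_seven, sum_Ico_tri_seven, sum_Ico_tri_seven]

theorem sum_cells_weight_eleven : ∑ c ∈ cells (0, 0, 11, 11), weight c = 4 := by
  rw [sum_cells_weight]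
  decide

theorem weight_seven_ne_four : ∀ x < 5, ∀ y < 5, alt x * tri y + tri x * alt y ≠ 4 := by
  decide

/-- the 11×11 square cannot be tiled with 2×2, 3×3 and 7×7 squares. -/
theorem no_tiling_11 : ¬ Tiles {(2, 2), (3, 3), (7, 7)} 11 11 := by
  rintro ⟨P, hP, hcov⟩
  have hfit : ∀ q ∈ P, q.1 + q.2.2.1 ≤ 11 ∧ q.2.1 + q.2.2.2 ≤ 11 := fun q hq => (hP q hq).2
  have hsides : ∀ q ∈ P, q.2.2 = (2, 2) ∨ q.2.2 = (3, 3) ∨ q.2.2 = (7, 7) := fun q hq => by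
    simpa using (hP q hq).1
  have hsmall : ∀ q ∈ P, q.2.2 ≠ (7, 7) → ∑ c ∈ cells q, weight c = 0 := by
    rintro ⟨x, y, s⟩ hq h7
    rcases hsides _ hq with rfl | rfl | rfl
    exacts [sum_cells_weight_two x y, sum_cells_weight_three x y, absurd rfl h7]
  have htotal := sum_cells_weight_eleven
  rw [sum_cells_eq_sum_tiles hfit hcov] at htotal
  by_cases h7 : ∃ q ∈ P, q.2.2 = (7, 7)
  · obtain ⟨⟨x, y, s⟩, hq, rfl⟩ := h7
    have hunique : ∀ q' ∈ P, q'.2.2 = (7, 7) → q' = (x, y, 7, 7) := fun q' hq' h7' =>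
      tile_eq_of_lt_add_of_lt_add hfit hcov hq' hq (by simp [h7']) (by simp [h7'])
    rw [sum_eq_single_of_mem _ hq fun q' hq' hne => hsmall q' hq' (hne ∘ hunique q' hq'),
      sum_cells_weight_seven] at htotal
    have hxy : x + 7 ≤ 11 ∧ y + 7 ≤ 11 := hfit _ hq
    exact weight_seven_ne_four x (by omega) y (by omega) htotal
  · rw [sum_eq_zero fun q hq => hsmall q hq fun h => h7 ⟨q, hq, h⟩] at htotal
    norm_num at htotal
end
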